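/- Let n ≥ 2 and a, b, c, d ∈ ℝ, and let f(z) = zⁿ − n(a + b·i)z + (n−1)(c + d·i). Then there exists z ∈ ℂ with Re(f(z)) = 0 and f'(z) = 0 if and only if there exist r ≥ 0 and θ ∈ ℝ such that a = r·cos(θ), b = r·sin(θ), and c = r^{n/(n−1)}·cos(n·θ/(n−1)). In particular this condition is independent of d. -/

import Mathlib

/-!
The critical points of `f z = zⁿ - n w z + (n - 1) e` are the `(n - 1)`-st roots of `w`, and at
such a root `zⁿ = w z`, so `f z = (n - 1) (e - zⁿ)`. Hence `R(f)` is singular iff some root `z` of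
`z ^ (n - 1) = w` has `Re (zⁿ) = Re e = c`. Writing `z = ρ e^{iφ}` gives `w = ρ^{n-1} e^{i(n-1)φ}`
and `Re (zⁿ) = ρⁿ cos (nφ)`; the substitution `r = ρ^{n-1}`, `θ = (n - 1) φ` turns this into the
stated condition on `(a, b, c)`.
-/

open Complex

theorem deriv_pow_sub_mul_add {𝕜 : Type*} [NontriviallyNormedField 𝕜] (n : ℕ) (p q z : 𝕜) :
    deriv (fun z => z ^ n - p * z + q) z = n * z ^ (n - 1) - p := by
  simpa using (((hasDerivAt_pow n z).sub ((hasDerivAt_id z).const_mul p)).add_const q).deriv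

theorem pow_sub_mul_add_eq_of_pow_pred_eq {R : Type*} [CommRing R] {n : ℕ} (hn : n ≠ 0)
    {z w : R} (e : R) (hz : z ^ (n - 1) = w) :
    z ^ n - n * w * z + (n - 1) * e = (n - 1) * (e - z ^ n) := by
  obtain ⟨m, rfl⟩ := Nat.exists_eq_succ_of_ne_zero hn
  rw [Nat.succ_sub_one] at hz
  rw [pow_succ, hz]
  push_cast
  ring

theorem re_eq_zero_and_deriv_eq_zero_iff {n : ℕ} (hn : 2 ≤ n) (w e : ℂ) (f : ℂ → ℂ)
    (hf : ∀ z, f z = z ^ n - n * w * z + (n - 1) * e) (z : ℂ) :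
    (f z).re = 0 ∧ deriv f z = 0 ↔ z ^ (n - 1) = w ∧ (z ^ n).re = e.re := by
  obtain rfl : f = fun z => z ^ n - n * w * z + (n - 1) * e := funext hf
  beta_reduce
  have hn0 : (n : ℂ) ≠ 0 := by exact_mod_cast (by omega : n ≠ 0)
  have hn1 : (n : ℝ) - 1 ≠ 0 := by
    have : (2 : ℝ) ≤ n := by exact_mod_cast hn
    linarith
  rw [deriv_pow_sub_mul_add, sub_eq_zero, mul_right_inj' hn0, and_comm]
  refine and_congr_right fun hz => ?_
  rw [pow_sub_mul_add_eq_of_pow_pred_eq (by omega) e hz]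
  simp [hn1, sub_eq_zero, eq_comm]

theorem ofReal_mul_exp_mul_I_pow (ρ φ : ℝ) (k : ℕ) :
    ((ρ : ℂ) * exp (φ * I)) ^ k = ((ρ ^ k : ℝ) : ℂ) * exp (((k * φ : ℝ) : ℂ) * I) := by
  rw [mul_pow, ← exp_nat_mul]
  push_cast
  ring_nf

theorem eq_ofReal_mul_exp_mul_I_iff (w : ℂ) (r θ : ℝ) :
    w = r * exp (θ * I) ↔ w.re = r * Real.cos θ ∧ w.im = r * Real.sin θ := by
  simp [Complex.ext_iff, exp_ofReal_mul_I_re, exp_ofReal_mul_I_im]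

theorem exists_polar_iff {P : ℂ → Prop} :
    (∃ z, P z) ↔ ∃ ρ φ : ℝ, 0 ≤ ρ ∧ P (ρ * exp (φ * I)) :=
  ⟨fun ⟨z, hz⟩ => ⟨‖z‖, z.arg, norm_nonneg z, by rwa [norm_mul_exp_arg_mul_I]⟩,
    fun ⟨_, _, _, h⟩ => ⟨_, h⟩⟩

theorem exists_rpow_mul_reparam_iff {s : ℝ} (hs : s ≠ 0) {P : ℝ → ℝ → Prop} :
    (∃ ρ φ : ℝ, 0 ≤ ρ ∧ P (ρ ^ s) (s * φ)) ↔ ∃ r θ : ℝ, 0 ≤ r ∧ P r θ := by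
  constructor
  · rintro ⟨ρ, φ, hρ, h⟩
    exact ⟨_, _, Real.rpow_nonneg hρ s, h⟩
  · rintro ⟨r, θ, hr, h⟩
    refine ⟨r ^ s⁻¹, θ / s, Real.rpow_nonneg hr _, ?_⟩
    rwa [Real.rpow_inv_rpow hr hs, mul_div_cancel₀ θ hs]

theorem exists_pow_pred_eq_and_re_pow_eq_iff {n : ℕ} (hn : 2 ≤ n) (w : ℂ) (c : ℝ) :
    (∃ z : ℂ, z ^ (n - 1) = w ∧ (z ^ n).re = c) ↔
      ∃ r θ : ℝ, 0 ≤ r ∧ w.re = r * Real.cos θ ∧ w.im = r * Real.sin θ ∧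
        c = r ^ ((n : ℝ) / ((n : ℝ) - 1)) * Real.cos ((n : ℝ) * θ / ((n : ℝ) - 1)) := by
  set s : ℝ := (n : ℝ) - 1
  have hcast : ((n - 1 : ℕ) : ℝ) = s := Nat.cast_pred (by omega)
  have hs : s ≠ 0 := hcast ▸ Nat.cast_ne_zero.mpr (by omega)
  rw [← exists_rpow_mul_reparam_iff hs, exists_polar_iff]
  refine exists_congr fun ρ => exists_congr fun φ => and_congr_right fun hρ => ?_
  have hpow : ρ ^ (n - 1) = ρ ^ s := by rw [← hcast, Real.rpow_natCast]
  have hpow' : (ρ ^ s) ^ ((n : ℝ) / s) = ρ ^ n := by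
    rw [← Real.rpow_mul hρ, mul_div_cancel₀ _ hs, Real.rpow_natCast]
  rw [ofReal_mul_exp_mul_I_pow, ofReal_mul_exp_mul_I_pow, hcast, hpow, eq_comm,
    eq_ofReal_mul_exp_mul_I_iff, hpow', mul_div_assoc, mul_div_cancel_left₀ _ hs, re_ofReal_mul,
    exp_ofReal_mul_I_re, and_assoc, @eq_comm _ c]

/-- For `n ≥ 2` and `f(z) = zⁿ - n(a + bi)z + (n-1)(c + di)`: the real component `R(f)`
is singular (some point of `R(f)` is a critical point of `f`) iff there exist `r ≥ 0`
and `θ ∈ ℝ` with `a = r cos θ`, `b = r sin θ` and `c = r^(n/(n-1))·cos(nθ/(n-1))`;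
the condition does not involve `d`. -/
theorem stmt14 (n : ℕ) (hn : 2 ≤ n) (a b c d : ℝ) (f : ℂ → ℂ)
    (hf : ∀ z : ℂ, f z = z ^ n - (n : ℂ) * ((a : ℂ) + (b : ℂ) * Complex.I) * z
        + ((n : ℂ) - 1) * ((c : ℂ) + (d : ℂ) * Complex.I)) :
    (∃ z : ℂ, (f z).re = 0 ∧ deriv f z = 0) ↔
      ∃ r θ : ℝ, 0 ≤ r ∧ a = r * Real.cos θ ∧ b = r * Real.sin θ ∧
        c = r ^ ((n : ℝ) / ((n : ℝ) - 1)) * Real.cos ((n : ℝ) * θ / ((n : ℝ) - 1)) := by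
  rw [exists_congr (re_eq_zero_and_deriv_eq_zero_iff hn _ _ f hf),
    exists_pow_pred_eq_and_re_pow_eq_iff hn]
  simp
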